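/- Let d ≥ 1 be an integer, ε, δ ∈ (0,1) with δ ≤ ε, and let Ñ be a finite δ-approximation for B̃_d(ε) with |Ñ| ≥ 3. Then Ñ(ε,d) ≤ 3·ln|Ñ|/δ; that is, there exists a set P ⊆ [0,1]^d of cardinality at most 3·ln|Ñ|/δ with disp̃(P) ≤ ε. -/
import Mathlib


open MeasureTheory Real Set ProbabilityTheory

noncomputable section

/-- The unit cube `[0,1]^d`. -/
def cube (d : ℕ) : Set (Fin d → ℝ) := Set.univ.pi fun _ => Set.Icc 0 1

/-- Axis-parallel boxes `∏ [aᵢ, bᵢ)` with `0 ≤ aᵢ ≤ bᵢ ≤ 1`. -/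
def IsBox {d : ℕ} (B : Set (Fin d → ℝ)) : Prop :=
  ∃ a b : Fin d → ℝ, (∀ i, 0 ≤ a i ∧ a i ≤ b i ∧ b i ≤ 1) ∧
    B = Set.univ.pi fun i => Set.Ico (a i) (b i)

/-- Periodic axis-parallel boxes on the torus: in each coordinate the factor is
`(aᵢ, bᵢ)` if `aᵢ < bᵢ`, and `[0,1] \ [bᵢ, aᵢ]` if `bᵢ < aᵢ`. -/
def IsPeriodicBox {d : ℕ} (B : Set (Fin d → ℝ)) : Prop :=
  ∃ a b : Fin d → ℝ, a ∈ cube d ∧ b ∈ cube d ∧ (∀ i, a i ≠ b i) ∧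
    B = Set.univ.pi fun i =>
      if a i < b i then Set.Ioo (a i) (b i) else Set.Icc 0 1 \ Set.Icc (b i) (a i)

/-- `d`-dimensional Lebesgue volume, as a real number. -/
def vol {d : ℕ} (B : Set (Fin d → ℝ)) : ℝ := (MeasureTheory.volume B).toReal

/-- Dispersion of a point set: supremum of volumes of boxes avoiding `P`. -/
def disp {d : ℕ} (P : Set (Fin d → ℝ)) : ℝ :=
  sSup {v | ∃ B : Set (Fin d → ℝ), IsBox B ∧ B ∩ P = ∅ ∧ v = vol B}

/-- Periodic (torus) dispersion of a point set. -/
def pdisp {d : ℕ} (P : Set (Fin d → ℝ)) : ℝ :=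
  sSup {v | ∃ B : Set (Fin d → ℝ), IsPeriodicBox B ∧ B ∩ P = ∅ ∧ v = vol B}

/-- Minimal dispersion `disp*(n,d)`. -/
def dispStar (n d : ℕ) : ℝ :=
  sInf {v | ∃ P : Finset (Fin d → ℝ), ↑P ⊆ cube d ∧ P.card = n ∧ v = disp (↑P : Set (Fin d → ℝ))}

/-- Minimal periodic dispersion `disp̃*(n,d)`. -/
def pdispStar (n d : ℕ) : ℝ :=
  sInf {v | ∃ P : Finset (Fin d → ℝ), ↑P ⊆ cube d ∧ P.card = n ∧ v = pdisp (↑P : Set (Fin d → ℝ))}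

/-- Inverse of the minimal dispersion, `N(ε,d)`. -/
def invDisp (ε : ℝ) (d : ℕ) : ℕ := sInf {n : ℕ | 0 < n ∧ dispStar n d ≤ ε}

/-- A `δ`-approximation of the family of boxes of volume at least `ε`. -/
def DeltaApprox {d : ℕ} (δ ε : ℝ) (𝒩 : Set (Set (Fin d → ℝ))) : Prop :=
  (∀ A ∈ 𝒩, IsBox A) ∧
  ∀ B : Set (Fin d → ℝ), IsBox B → ε ≤ vol B → ∃ B₀ ∈ 𝒩, B₀ ⊆ B ∧ δ ≤ vol B₀

/-- A `δ`-approximation of the family of periodic boxes of volume at least `ε`. -/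
def PeriodicDeltaApprox {d : ℕ} (δ ε : ℝ) (𝒩 : Set (Set (Fin d → ℝ))) : Prop :=
  (∀ A ∈ 𝒩, IsPeriodicBox A) ∧
  ∀ B : Set (Fin d → ℝ), IsPeriodicBox B → ε ≤ vol B → ∃ B₀ ∈ 𝒩, B₀ ⊆ B ∧ δ ≤ vol B₀

open scoped Classical ENNReal

lemma volume_cube (d : ℕ) : volume (cube d) = 1 := by
  rw [cube, volume_pi_pi]; simp

lemma zero_mem_cube (d : ℕ) : (fun _ => (0:ℝ)) ∈ cube d := by
  intro i _; exact ⟨le_refl 0, zero_le_one⟩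

lemma pigeon (d : ℕ) (δ : ℝ) (hδ0 : 0 < δ) (F : Finset (Set (Fin d → ℝ)))
    (hF : ∀ A ∈ F, MeasurableSet A ∧ A ⊆ cube d ∧ δ ≤ vol A) :
    ∃ x ∈ cube d, δ * F.card ≤ ((F.filter (fun A => x ∈ A)).card : ℝ) := by
  rcases F.eq_empty_or_nonempty with rfl | hne
  · exact ⟨fun _ => 0, zero_mem_cube d, by simp⟩
  by_contra h
  push_neg at h
  have hpos : 0 < δ * F.card := by
    have : 0 < (F.card : ℝ) := by exact_mod_cast Finset.card_pos.mpr hne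
    positivity
  set c : ℕ := ⌈δ * F.card⌉₊ - 1 with hc
  have hceil : 1 ≤ ⌈δ * F.card⌉₊ := Nat.one_le_iff_ne_zero.mpr (by
    simp [Nat.ceil_eq_zero, not_le, hpos])
  have hcR : (c : ℝ) < δ * F.card := by
    have h1 : ((⌈δ * F.card⌉₊ : ℝ)) < δ * F.card + 1 := Nat.ceil_lt_add_one hpos.le
    have : ((c : ℝ)) = (⌈δ * F.card⌉₊ : ℝ) - 1 := by
      rw [hc]; push_cast [hceil]; ring
    linarith
  have hcount : ∀ x ∈ cube d, ((F.filter (fun A => x ∈ A)).card : ℕ) ≤ c := by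
    intro x hx
    have h2 : ((F.filter (fun A => x ∈ A)).card : ℝ) < (⌈δ * F.card⌉₊ : ℝ) :=
      lt_of_lt_of_le (h x hx) (Nat.le_ceil _)
    have h3 : (F.filter (fun A => x ∈ A)).card < ⌈δ * F.card⌉₊ := by exact_mod_cast h2
    omega
  -- Each A has measure ≥ ofReal δ
  have hmeasA : ∀ A ∈ F, ENNReal.ofReal δ ≤ volume A := by
    intro A hA
    exact ENNReal.ofReal_le_of_le_toReal (hF A hA).2.2
  have hsum : (F.card : ℝ≥0∞) * ENNReal.ofReal δ ≤ ∑ A ∈ F, volume A := by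
    calc (F.card : ℝ≥0∞) * ENNReal.ofReal δ = F.card • ENNReal.ofReal δ := by
          rw [nsmul_eq_mul]
      _ ≤ ∑ A ∈ F, volume A := Finset.card_nsmul_le_sum F _ _ hmeasA
  have hint1 : ∀ A ∈ F, ∫⁻ x in cube d, A.indicator (fun _ => (1:ℝ≥0∞)) x = volume A := by
    intro A hA
    rw [lintegral_indicator_const (hF A hA).1, one_mul, Measure.restrict_apply (hF A hA).1,
      Set.inter_eq_self_of_subset_left (hF A hA).2.1]
  have hint2 : ∑ A ∈ F, volume A
      = ∫⁻ x in cube d, ∑ A ∈ F, A.indicator (fun _ => (1:ℝ≥0∞)) x := by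
    rw [lintegral_finset_sum _ (fun A hA => measurable_const.indicator (hF A hA).1)]
    exact (Finset.sum_congr rfl (fun A hA => (hint1 A hA).symm))
  have hptwise : ∀ x, (∑ A ∈ F, A.indicator (fun _ => (1:ℝ≥0∞)) x)
      = ((F.filter (fun A => x ∈ A)).card : ℝ≥0∞) := by
    intro x
    rw [Finset.card_filter]
    push_cast
    exact Finset.sum_congr rfl (fun A _ => by simp [Set.indicator_apply])
  have hbound : ∫⁻ x in cube d, ∑ A ∈ F, A.indicator (fun _ => (1:ℝ≥0∞)) x ≤ (c : ℝ≥0∞) := by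
    calc ∫⁻ x in cube d, ∑ A ∈ F, A.indicator (fun _ => (1:ℝ≥0∞)) x
        ≤ ∫⁻ _x in cube d, (c : ℝ≥0∞) := by
          apply setLIntegral_mono measurable_const
          intro x hx
          rw [hptwise x]
          exact_mod_cast hcount x hx
      _ = (c : ℝ≥0∞) * volume (cube d) := setLIntegral_const _ _
      _ = (c : ℝ≥0∞) := by rw [volume_cube]; ring
  have hfinal : (F.card : ℝ≥0∞) * ENNReal.ofReal δ ≤ (c : ℝ≥0∞) :=
    le_trans hsum (le_trans (le_of_eq hint2) hbound)
  have hlt : (c : ℝ≥0∞) < (F.card : ℝ≥0∞) * ENNReal.ofReal δ := by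
    have h1 : (c : ℝ) < (F.card : ℝ) * δ := by rw [mul_comm]; exact hcR
    calc (c : ℝ≥0∞) = ENNReal.ofReal (c : ℝ) := by simp
      _ < ENNReal.ofReal ((F.card : ℝ) * δ) :=
          (ENNReal.ofReal_lt_ofReal_iff ((Nat.cast_nonneg c).trans_lt h1)).mpr h1
      _ = ENNReal.ofReal (F.card : ℝ) * ENNReal.ofReal δ :=
          ENNReal.ofReal_mul (by positivity)
      _ = (F.card : ℝ≥0∞) * ENNReal.ofReal δ := by simp
  exact absurd hfinal (not_le.mpr hlt)

lemma greedy (d : ℕ) (δ : ℝ) (hδ0 : 0 < δ) (hδ1 : δ < 1) :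
    ∀ n : ℕ, ∀ F : Finset (Set (Fin d → ℝ)),
      (∀ A ∈ F, MeasurableSet A ∧ A ⊆ cube d ∧ δ ≤ vol A) →
      (1 - δ) ^ n * F.card < 1 →
      ∃ P : Finset (Fin d → ℝ), ↑P ⊆ cube d ∧ P.card ≤ n ∧ ∀ A ∈ F, ∃ x ∈ P, x ∈ A := by
  intro n
  induction n with
  | zero =>
    intro F hF hlt
    simp only [pow_zero, one_mul] at hlt
    have : F.card = 0 := by exact_mod_cast Nat.lt_one_iff.mp (by exact_mod_cast hlt)
    rw [Finset.card_eq_zero] at this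
    subst this
    exact ⟨∅, by simp, by simp, by simp⟩
  | succ n ih =>
    intro F hF hlt
    rcases F.eq_empty_or_nonempty with rfl | hne
    · exact ⟨∅, by simp, by simp, by simp⟩
    obtain ⟨x, hxcube, hxcount⟩ := pigeon d δ hδ0 F hF
    set F' := F.filter (fun A => x ∉ A) with hF'
    have hsplit : (F.filter (fun A => x ∈ A)).card + F'.card = F.card :=
      Finset.card_filter_add_card_filter_not _
    have hcard' : (F'.card : ℝ) ≤ (1 - δ) * F.card := by
      have : (F'.card : ℝ) = F.card - (F.filter (fun A => x ∈ A)).card := by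
        push_cast [← hsplit]; ring
      rw [this]; nlinarith [hxcount]
    have hlt' : (1 - δ) ^ n * F'.card < 1 := by
      have h1δ : (0:ℝ) ≤ 1 - δ := by linarith
      calc (1 - δ) ^ n * F'.card ≤ (1 - δ) ^ n * ((1 - δ) * F.card) := by
            apply mul_le_mul_of_nonneg_left hcard' (by positivity)
        _ = (1 - δ) ^ (n + 1) * F.card := by ring
        _ < 1 := hlt
    obtain ⟨P', hP'cube, hP'card, hP'hit⟩ := ih F' (fun A hA => hF A (Finset.mem_filter.mp hA).1) hlt'
    refine ⟨insert x P', ?_, ?_, ?_⟩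
    · intro y hy
      rcases Finset.mem_insert.mp hy with rfl | hy
      · exact hxcube
      · exact hP'cube hy
    · calc (insert x P').card ≤ P'.card + 1 := Finset.card_insert_le _ _
        _ ≤ n + 1 := by omega
    · intro A hA
      by_cases hxA : x ∈ A
      · exact ⟨x, Finset.mem_insert_self _ _, hxA⟩
      · obtain ⟨y, hy, hyA⟩ := hP'hit A (Finset.mem_filter.mpr ⟨hA, hxA⟩)
        exact ⟨y, Finset.mem_insert_of_mem hy, hyA⟩

lemma periodicBox_props {d : ℕ} {B : Set (Fin d → ℝ)} (hB : IsPeriodicBox B) :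
    MeasurableSet B ∧ B ⊆ cube d := by
  obtain ⟨a, b, ha, hb, hne, rfl⟩ := hB
  constructor
  · apply MeasurableSet.univ_pi
    intro i
    by_cases h : a i < b i <;> simp only [h, if_true, if_false]
    · exact measurableSet_Ioo
    · exact measurableSet_Icc.diff measurableSet_Icc
  · apply Set.pi_mono
    intro i _
    by_cases h : a i < b i <;> simp only [h, if_true, if_false]
    · exact le_trans Set.Ioo_subset_Icc_self (Set.Icc_subset_Icc (ha i trivial).1 (hb i trivial).2)
    · exact Set.diff_subset

/-- Older probabilistic lemma, torus case: if `𝒩` is a finite `δ`-approximation for the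
periodic boxes of volume `≥ ε` with `|𝒩| ≥ 3`, then there is a set `P ⊆ [0,1]^d` of
cardinality at most `3 ln|𝒩| / δ` with `disp̃(P) ≤ ε`. -/
theorem old_piercing_lemma_torus (d : ℕ) (hd : 1 ≤ d) (δ ε : ℝ)
    (hδ : δ ∈ Set.Ioo (0 : ℝ) 1) (hε : ε ∈ Set.Ioo (0 : ℝ) 1) (hδε : δ ≤ ε)
    (𝒩 : Set (Set (Fin d → ℝ))) (hfin : 𝒩.Finite)
    (happ : PeriodicDeltaApprox δ ε 𝒩) (hcard : 3 ≤ 𝒩.ncard) :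
    ∃ P : Finset (Fin d → ℝ), ↑P ⊆ cube d ∧
      (P.card : ℝ) ≤ 3 * Real.log 𝒩.ncard / δ ∧
      pdisp (↑P : Set (Fin d → ℝ)) ≤ ε := by
  obtain ⟨hδ0, hδ1⟩ := hδ
  set m : ℕ := 𝒩.ncard with hm
  have hmR : (3 : ℝ) ≤ (m : ℝ) := by exact_mod_cast hcard
  have hm0 : (0 : ℝ) < m := by linarith
  -- log m > 1
  have hlog1 : 1 < Real.log m := by
    rw [← Real.exp_lt_exp (x := 1)]
    calc Real.exp 1 < 2.7182818286 := Real.exp_one_lt_d9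
      _ ≤ 3 := by norm_num
      _ ≤ (m : ℝ) := hmR
      _ = Real.exp (Real.log m) := (Real.exp_log hm0).symm
  set y : ℝ := Real.log m / δ with hy
  have hy1 : 1 < y := by
    rw [hy]
    calc (1:ℝ) < Real.log m := hlog1
      _ = Real.log m / 1 := by ring
      _ ≤ Real.log m / δ := by
          apply div_le_div_of_nonneg_left (by linarith) hδ0 hδ1.le
  set n : ℕ := ⌈y⌉₊ with hn
  have hyn : y ≤ n := Nat.le_ceil y
  have hn0 : n ≠ 0 := by
    have : 0 < n := Nat.ceil_pos.mpr (by linarith)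
    omega
  have hδn : Real.log m ≤ δ * n := by
    have := mul_le_mul_of_nonneg_left hyn hδ0.le
    calc Real.log m = δ * y := by rw [hy]; field_simp
      _ ≤ δ * n := this
  -- the family to pierce
  set F : Finset (Set (Fin d → ℝ)) := hfin.toFinset.filter (fun A => δ ≤ vol A) with hF
  have hFprop : ∀ A ∈ F, MeasurableSet A ∧ A ⊆ cube d ∧ δ ≤ vol A := by
    intro A hA
    obtain ⟨hA1, hA2⟩ := Finset.mem_filter.mp hA
    obtain ⟨hmeas, hsub⟩ := periodicBox_props (happ.1 A (hfin.mem_toFinset.mp hA1))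
    exact ⟨hmeas, hsub, hA2⟩
  have hFcard : (F.card : ℝ) ≤ (m : ℝ) := by
    have h1 : F.card ≤ hfin.toFinset.card := Finset.card_filter_le _ _
    have h2 : hfin.toFinset.card = m := by rw [hm, Set.ncard_eq_toFinset_card _ hfin]
    exact_mod_cast h2 ▸ h1
  have hpow : (1 - δ) ^ n * F.card < 1 := by
    have h1 : (1 - δ : ℝ) < Real.exp (-δ) := by
      have := Real.add_one_lt_exp (x := -δ) (by linarith)
      linarith
    have h2 : ((1 - δ : ℝ)) ^ n < Real.exp (-δ) ^ n :=
      pow_lt_pow_left₀ h1 (by linarith) hn0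
    have h3 : Real.exp (-δ) ^ n = Real.exp (-(δ * n)) := by
      rw [← Real.exp_nat_mul]; ring_nf
    have h4 : Real.exp (-(δ * n)) ≤ Real.exp (-(Real.log m)) :=
      Real.exp_le_exp.mpr (by linarith)
    have h5 : Real.exp (-(Real.log m)) = (m : ℝ)⁻¹ := by
      rw [Real.exp_neg, Real.exp_log hm0]
    have h6 : ((1 - δ : ℝ)) ^ n < (m : ℝ)⁻¹ := by
      rw [← h5, ← h3] at *; linarith
    calc (1 - δ) ^ n * F.card ≤ (1 - δ) ^ n * m := by
          apply mul_le_mul_of_nonneg_left hFcard (pow_nonneg (by linarith) n)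
      _ < (m : ℝ)⁻¹ * m := by
          apply mul_lt_mul_of_pos_right h6 hm0
      _ = 1 := by field_simp
  obtain ⟨P, hPcube, hPcard, hPhit⟩ := greedy d δ hδ0 hδ1 n F hFprop hpow
  refine ⟨P, hPcube, ?_, ?_⟩
  · have h1 : (n : ℝ) < y + 1 := Nat.ceil_lt_add_one (by linarith)
    have h2 : (P.card : ℝ) ≤ n := by exact_mod_cast hPcard
    have h3 : 3 * Real.log m / δ = 3 * y := by rw [hy]; ring
    rw [h3]
    linarith
  · apply Real.sSup_le _ hε.1.le
    rintro v ⟨B, hBbox, hBdisj, rfl⟩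
    by_contra hgt
    push_neg at hgt
    obtain ⟨B₀, hB₀mem, hB₀sub, hB₀vol⟩ := happ.2 B hBbox hgt.le
    have hB₀F : B₀ ∈ F := Finset.mem_filter.mpr ⟨hfin.mem_toFinset.mpr hB₀mem, hB₀vol⟩
    obtain ⟨x, hxP, hxB₀⟩ := hPhit B₀ hB₀F
    have : x ∈ B ∩ (↑P : Set (Fin d → ℝ)) := ⟨hB₀sub hxB₀, hxP⟩
    rw [hBdisj] at this
    exact this
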